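/- arXiv:2510.04156 — 3 statements merged into one kernel-verified Lean document; each statement's English description precedes it below -/
import Mathlib

section
/- The Hermite–Padé identity for binomial functions holds: ₂F₁(−ν−n, −m; −m−n; x) − (1−x)^ν · ₂F₁(ν−m, −n; −m−n; x) = (−1)^m · [C(n+ν, m+n+1)/C(m+n, m)] · x^{m+n+1} · ₂F₁(−ν+m+1, n+1; m+n+2; x), as an identity of formal power series in x over ℝ, for every real ν and nonnegative integers m, n (with ν not a negative integer so the generalized binomial coefficient C(n+ν, m+n+1) makes sense). -/
/-!
Both sides are annihilated by the hypergeometric operator with parameters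
`(a, b, c) = (-ν - n, -m, -m - n)`: the first `₂F₁` directly, `(1 - x) ^ ν ₂F₁(ν - m, -n; -m - n)`
by Euler's transformation, and `x ^ (m + n + 1) ₂F₁(-ν + m + 1, n + 1; m + n + 2)` as the second
solution at the integral exponent `1 - c`. As `c = -(m + n)`, the coefficient recurrence degenerates
only at `k = m + n`, so a solution is determined by its coefficients of `x ^ 0` and `x ^ (m + n + 1)`.
The former vanish on both sides. The latter is, on the left, a polynomial of degree `≤ m + n + 1`
in `ν` which vanishes at `ν = 0, …, m` (by a degree count) and at `ν = -1, …, -n` (by the symmetry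
`m ↔ n`, `ν ↔ -ν`), and equals `(-1) ^ m / C(m + n, m)` at `ν = m + 1`; so does the one on the right.
-/

open Finset PowerSeries

/-- Pochhammer symbol `(a)_k = a(a+1)⋯(a+k-1)`. -/
noncomputable def poch (a : ℝ) (k : ℕ) : ℝ := ∏ i ∈ Finset.range k, (a + i)

/-- Generalized binomial coefficient `C(a,k) = a(a-1)⋯(a-k+1)/k!`. -/
noncomputable def gchoose (a : ℝ) (k : ℕ) : ℝ :=
  (∏ i ∈ Finset.range k, (a - i)) / k.factorial

/-- The (formal) hypergeometric series `₂F₁(a, b; c; x) ∈ ℝ⟦x⟧`. -/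
noncomputable def hypSeries (a b c : ℝ) : PowerSeries ℝ :=
  PowerSeries.mk fun k => poch a k * poch b k / (poch c k * k.factorial)

/-- The formal binomial series `(1-x)^ν = ∑_k C(ν,k)(-1)^k x^k ∈ ℝ⟦x⟧`. -/
noncomputable def binomOneSub (ν : ℝ) : PowerSeries ℝ :=
  PowerSeries.mk fun k => gchoose ν k * (-1) ^ k

lemma one_sub_X_ne_zero : (1 - X : ℝ⟦X⟧) ≠ 0 := by
  intro h
  simpa using congrArg constantCoeff h

lemma coeff_mul_eq_zero_of_lt {R : Type*} [Semiring R] {f g : R⟦X⟧} {p q k : ℕ}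
    (hf : ∀ i, p < i → coeff i f = 0) (hg : ∀ j, q < j → coeff j g = 0) (hk : p + q < k) :
    coeff k (f * g) = 0 := by
  rw [coeff_mul]
  refine sum_eq_zero fun x hx => ?_
  rw [HasAntidiagonal.mem_antidiagonal] at hx
  rcases lt_or_ge p x.1 with h | h
  · rw [hf _ h, zero_mul]
  · rw [hg _ (by omega), mul_zero]

lemma coeff_add_mul_of_coeff_eq_zero {R : Type*} [Semiring R] {f g : R⟦X⟧} {p q : ℕ}
    (hf : ∀ i, p < i → coeff i f = 0) (hg : ∀ j, q < j → coeff j g = 0) :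
    coeff (p + q) (f * g) = coeff p f * coeff q g := by
  rw [coeff_mul, sum_eq_single_of_mem (p, q) (HasAntidiagonal.mem_antidiagonal.mpr rfl)]
  rintro ⟨i, j⟩ hij hne
  rw [HasAntidiagonal.mem_antidiagonal] at hij
  rcases lt_or_ge p i with h | h
  · rw [hf _ h, zero_mul]
  · rw [hg _ (by grind), mul_zero]

lemma poch_eq_eval_ascPochhammer (a : ℝ) (k : ℕ) : poch a k = (ascPochhammer ℝ k).eval a := by
  induction k with
  | zero => simp [poch]
  | succ k ih => rw [poch, prod_range_succ, ← poch, ih, ascPochhammer_succ_eval]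

lemma poch_succ (a : ℝ) (k : ℕ) : poch a (k + 1) = poch a k * (a + k) := by
  rw [poch, prod_range_succ, ← poch]

lemma poch_ne_zero {a : ℝ} {k : ℕ} (h : ∀ i < k, a + i ≠ 0) : poch a k ≠ 0 :=
  prod_ne_zero_iff.mpr fun i hi => h i (mem_range.mp hi)

lemma poch_neg_natCast_of_lt {q k : ℕ} (h : q < k) : poch (-(q : ℝ)) k = 0 := by
  rw [poch_eq_eval_ascPochhammer, ascPochhammer_eval_neg_coe_nat_of_lt h]

lemma poch_neg_natCast_ne_zero {q k : ℕ} (h : k ≤ q) : poch (-(q : ℝ)) k ≠ 0 := by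
  rw [poch_eq_eval_ascPochhammer, Ne, ascPochhammer_eval_eq_zero_iff, neg_neg]
  rintro ⟨j, hj, hjq⟩
  have := Nat.cast_injective hjq
  omega

lemma poch_neg_natCast (N q : ℕ) : poch (-(N : ℝ)) q = (-1) ^ q * N.descFactorial q := by
  rw [poch_eq_eval_ascPochhammer, ascPochhammer_eval_neg_eq_descPochhammer,
    descPochhammer_eval_eq_descFactorial]

lemma poch_one (k : ℕ) : poch 1 k = k.factorial := by
  rw [poch_eq_eval_ascPochhammer, ascPochhammer_eval_one]

lemma gchoose_eq_eval_descPochhammer (a : ℝ) (k : ℕ) :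
    gchoose a k = (descPochhammer ℝ k).eval a / k.factorial := by
  rw [gchoose, descPochhammer_eval_eq_prod_range]

lemma gchoose_eq_ringChoose (a : ℝ) (k : ℕ) : gchoose a k = Ring.choose a k := by
  rw [Ring.choose_eq_smul, Polynomial.descPochhammer_smeval_eq_ascPochhammer,
    Polynomial.ascPochhammer_smeval_eq_eval,
    ← descPochhammer_eval_eq_ascPochhammer, smul_eq_mul, gchoose_eq_eval_descPochhammer,
    div_eq_inv_mul]

lemma gchoose_natCast (r k : ℕ) : gchoose (r : ℝ) k = r.choose k := by
  rw [gchoose_eq_ringChoose, Ring.choose_natCast]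

lemma gchoose_natCast_of_lt {r k : ℕ} (h : r < k) : gchoose (r : ℝ) k = 0 := by
  rw [gchoose_natCast, Nat.choose_eq_zero_of_lt h, Nat.cast_zero]

lemma gchoose_add (a b : ℝ) (k : ℕ) :
    gchoose (a + b) k = ∑ p ∈ antidiagonal k, gchoose a p.1 * gchoose b p.2 := by
  simp only [gchoose_eq_ringChoose]
  exact Ring.add_choose_eq k (Commute.all a b)

lemma gchoose_succ_mul (a : ℝ) (k : ℕ) :
    gchoose a (k + 1) * (k + 1) = gchoose a k * (a - k) := by
  rw [gchoose, gchoose, prod_range_succ, Nat.factorial_succ]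
  field_simp
  push_cast
  ring

lemma coeff_binomOneSub (ν : ℝ) (k : ℕ) :
    coeff k (binomOneSub ν) = gchoose ν k * (-1) ^ k := by
  rw [binomOneSub, coeff_mk]

lemma coeff_binomOneSub_natCast_of_lt {r k : ℕ} (h : r < k) : coeff k (binomOneSub r) = 0 := by
  rw [coeff_binomOneSub, gchoose_natCast_of_lt h, zero_mul]

lemma binomOneSub_zero : binomOneSub 0 = 1 := by
  ext k
  rcases k.eq_zero_or_pos with rfl | hk
  · simp [coeff_binomOneSub, gchoose]
  · rw [coeff_one, if_neg hk.ne']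
    exact_mod_cast coeff_binomOneSub_natCast_of_lt hk

lemma binomOneSub_add (ν μ : ℝ) : binomOneSub (ν + μ) = binomOneSub ν * binomOneSub μ := by
  ext k
  rw [coeff_mul, coeff_binomOneSub, gchoose_add, sum_mul]
  refine sum_congr rfl fun p hp => ?_
  rw [coeff_binomOneSub, coeff_binomOneSub, ← (mem_antidiagonal.mp hp), pow_add]
  ring

lemma one_sub_X_mul_derivative_binomOneSub (ν : ℝ) :
    (1 - X) * d⁄dX ℝ (binomOneSub ν) = C (-ν) * binomOneSub ν := by
  ext k
  have hsucc (j : ℕ) :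
      coeff (j + 1) (binomOneSub ν) * (j + 1) = (j - ν) * coeff j (binomOneSub ν) := by
    rw [coeff_binomOneSub, coeff_binomOneSub, pow_succ]
    linear_combination (-(-1 : ℝ) ^ j) * gchoose_succ_mul ν j
  rw [sub_mul, one_mul, map_sub, coeff_C_mul]
  rcases k with _ | k
  · simpa [coeff_derivative] using hsucc 0
  · simp only [coeff_derivative, coeff_succ_X_mul]
    rw [hsucc (k + 1)]
    push_cast
    ring

lemma coeff_hypSeries (a b c : ℝ) (k : ℕ) :
    coeff k (hypSeries a b c) = poch a k * poch b k / (poch c k * k.factorial) := by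
  rw [hypSeries, coeff_mk]

lemma coeff_hypSeries_neg_natCast_of_lt (a c : ℝ) {q k : ℕ} (h : q < k) :
    coeff k (hypSeries a (-q) c) = 0 := by
  rw [coeff_hypSeries, poch_neg_natCast_of_lt h, mul_zero, zero_div]

lemma coeff_hypSeries_succ (a b c : ℝ) {k : ℕ} (hc : poch c (k + 1) ≠ 0) :
    (k + 1) * (k + c) * coeff (k + 1) (hypSeries a b c) =
      (k + a) * (k + b) * coeff k (hypSeries a b c) := by
  rw [poch_succ] at hc
  obtain ⟨hpoch, hck⟩ := mul_ne_zero_iff.mp hc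
  rw [coeff_hypSeries, coeff_hypSeries, poch_succ, poch_succ, poch_succ, Nat.factorial_succ]
  field_simp
  push_cast
  ring

noncomputable def hypOp (a b c : ℝ) (y : ℝ⟦X⟧) : ℝ⟦X⟧ :=
  X * (1 - X) * d⁄dX ℝ (d⁄dX ℝ y) + (C c - C (a + b + 1) * X) * d⁄dX ℝ y - C (a * b) * y

lemma coeff_hypOp (a b c : ℝ) (y : ℝ⟦X⟧) (k : ℕ) :
    coeff k (hypOp a b c y) =
      (k + 1) * (k + c) * coeff (k + 1) y - (k + a) * (k + b) * coeff k y := by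
  -- kept opaque so that `simp` does not split `C (a + b + 1)`
  set s := a + b + 1 with hs
  have hy : hypOp a b c y = X * d⁄dX ℝ (d⁄dX ℝ y) - X * (X * d⁄dX ℝ (d⁄dX ℝ y)) +
      C c * d⁄dX ℝ y - C s * (X * d⁄dX ℝ y) - C (a * b) * y := by
    rw [hypOp]; ring
  rw [hy]
  rcases k with _ | _ | k <;>
    simp only [map_sub, map_add, coeff_C_mul, coeff_zero_X_mul, coeff_succ_X_mul,
      coeff_derivative] <;> push_cast [hs] <;> ring

lemma hypOp_eq_zero_iff {a b c : ℝ} {y : ℝ⟦X⟧} : hypOp a b c y = 0 ↔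
    ∀ k : ℕ, (k + 1) * (k + c) * coeff (k + 1) y = (k + a) * (k + b) * coeff k y := by
  simp only [PowerSeries.ext_iff, coeff_hypOp, map_zero, sub_eq_zero]

lemma hypOp_sub (a b c : ℝ) (y z : ℝ⟦X⟧) :
    hypOp a b c (y - z) = hypOp a b c y - hypOp a b c z := by
  ext k
  simp only [coeff_hypOp, map_sub]
  ring

lemma hypOp_C_mul (a b c r : ℝ) (y : ℝ⟦X⟧) :
    hypOp a b c (C r * y) = C r * hypOp a b c y := by
  ext k
  simp only [coeff_hypOp, coeff_C_mul]
  ring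

lemma hypOp_hypSeries {a b c : ℝ} (hc : ∀ i : ℕ, c + i ≠ 0) :
    hypOp a b c (hypSeries a b c) = 0 :=
  hypOp_eq_zero_iff.mpr fun _ => coeff_hypSeries_succ a b c (poch_ne_zero fun i _ => hc i)

lemma hypOp_hypSeries_neg_natCast (a : ℝ) {q M : ℕ} (hqM : q ≤ M) :
    hypOp a (-q) (-M) (hypSeries a (-q) (-M)) = 0 := by
  refine hypOp_eq_zero_iff.mpr fun k => ?_
  rcases lt_or_ge k M with hk | hk
  · exact coeff_hypSeries_succ _ _ _ (poch_neg_natCast_ne_zero hk)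
  rw [coeff_hypSeries_neg_natCast_of_lt a _ (by omega : q < k + 1), mul_zero]
  rcases (hqM.trans hk).eq_or_lt with rfl | hqk
  · ring
  · rw [coeff_hypSeries_neg_natCast_of_lt a _ hqk, mul_zero]

/-- The second solution `x ^ (1 - c) ₂F₁(a - c + 1, b - c + 1; 2 - c)`, for `c = -M`. -/
lemma hypOp_X_pow_mul (a b : ℝ) (M : ℕ) (z : ℝ⟦X⟧) :
    hypOp a b (-M) (X ^ (M + 1) * z) =
      X ^ (M + 1) * hypOp (a + M + 1) (b + M + 1) (M + 2) z := by
  ext k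
  simp only [coeff_hypOp, coeff_X_pow_mul']
  rcases lt_trichotomy k M with hk | rfl | hk
  · simp [show ¬M + 1 ≤ k + 1 by omega, show ¬M + 1 ≤ k by omega]
  · simp
  · obtain ⟨j, rfl⟩ : ∃ j, k = M + 1 + j := ⟨k - (M + 1), by omega⟩
    simp only [show M + 1 ≤ M + 1 + j + 1 by omega, show M + 1 ≤ M + 1 + j by omega, if_true,
      show M + 1 + j + 1 - (M + 1) = j + 1 by omega, show M + 1 + j - (M + 1) = j by omega]
    push_cast
    ring

/-- Euler's transformation at the level of the differential equation. -/
lemma hypOp_binomOneSub_mul (a b c : ℝ) (u : ℝ⟦X⟧) :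
    hypOp a b c (binomOneSub (c - a - b) * u) =
      binomOneSub (c - a - b) * hypOp (c - a) (c - b) c u := by
  set B := binomOneSub (c - a - b)
  have hB : (1 - X) * d⁄dX ℝ B = C (-(c - a - b)) * B := one_sub_X_mul_derivative_binomOneSub _
  have hB2 : (1 - X) * d⁄dX ℝ (d⁄dX ℝ B) = (1 + C (-(c - a - b))) * d⁄dX ℝ B := by
    have hd := congrArg (d⁄dX ℝ) hB
    simp only [Derivation.leibniz, smul_eq_mul, map_sub, Derivation.map_one_eq_zero,
      derivative_X, derivative_C] at hd
    linear_combination hd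
  have hD1 : d⁄dX ℝ (B * u) = B * d⁄dX ℝ u + u * d⁄dX ℝ B := by
    rw [Derivation.leibniz, smul_eq_mul, smul_eq_mul]
  have hD2 : d⁄dX ℝ (d⁄dX ℝ (B * u)) =
      B * d⁄dX ℝ (d⁄dX ℝ u) + 2 * d⁄dX ℝ B * d⁄dX ℝ u + u * d⁄dX ℝ (d⁄dX ℝ B) := by
    simp only [hD1, Derivation.leibniz, smul_eq_mul, map_add]
    ring
  refine mul_left_cancel₀ one_sub_X_ne_zero ?_
  rw [hypOp, hypOp, hD2, hD1]
  simp only [map_sub, map_add, map_mul, map_neg, map_one] at hB hB2 ⊢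
  linear_combination
    (2 * X * (1 - X) * d⁄dX ℝ u + (C c - (C a + C b + 1) * X) * u
      + X * u * (1 - (C c - C a - C b))) * hB + (X * (1 - X) * u) * hB2

lemma coeff_succ_eq_zero_of_hypOp_eq_zero {a b : ℝ} {M : ℕ} {y : ℝ⟦X⟧}
    (hy : hypOp a b (-M) y = 0) {k : ℕ} (hk : k ≠ M) (h : coeff k y = 0) :
    coeff (k + 1) y = 0 := by
  have hrec := hypOp_eq_zero_iff.mp hy k
  rw [h, mul_zero] at hrec
  have hkM : (k : ℝ) + -M ≠ 0 := by
    rw [← sub_eq_add_neg, sub_ne_zero]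
    exact_mod_cast hk
  exact (mul_eq_zero.mp hrec).resolve_left (mul_ne_zero (by positivity) hkM)

lemma coeff_eq_zero_of_hypOp_eq_zero_of_le {a b : ℝ} {M : ℕ} {y : ℝ⟦X⟧}
    (hy : hypOp a b (-M) y = 0) (h0 : coeff 0 y = 0) {k : ℕ} (hk : k ≤ M) : coeff k y = 0 := by
  induction k with
  | zero => exact h0
  | succ k ih => exact coeff_succ_eq_zero_of_hypOp_eq_zero hy (by omega) (ih (by omega))

lemma eq_zero_of_hypOp_eq_zero {a b : ℝ} {M : ℕ} {y : ℝ⟦X⟧} (hy : hypOp a b (-M) y = 0)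
    (h0 : coeff 0 y = 0) (hM : coeff (M + 1) y = 0) : y = 0 := by
  ext k
  rw [map_zero]
  induction k with
  | zero => exact h0
  | succ k ih =>
    rcases eq_or_ne k M with rfl | hk
    · exact hM
    · exact coeff_succ_eq_zero_of_hypOp_eq_zero hy hk ih

lemma exists_natDegree_le_eval_eq_gchoose (s : ℝ) (k : ℕ) :
    ∃ P : Polynomial ℝ, P.natDegree ≤ k ∧ ∀ ν, P.eval ν = gchoose (ν + s) k := by
  refine ⟨Polynomial.C (k.factorial : ℝ)⁻¹ *
    (descPochhammer ℝ k).comp (Polynomial.X + Polynomial.C s), ?_, fun ν => ?_⟩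
  · refine (Polynomial.natDegree_C_mul_le _ _).trans ?_
    rw [Polynomial.natDegree_comp, descPochhammer_natDegree, Polynomial.natDegree_X_add_C, mul_one]
  · rw [Polynomial.eval_mul, Polynomial.eval_C, Polynomial.eval_comp, Polynomial.eval_add,
      Polynomial.eval_X, Polynomial.eval_C, gchoose_eq_eval_descPochhammer, inv_mul_eq_div]

lemma exists_natDegree_le_eval_eq_poch (s : ℝ) (k : ℕ) :
    ∃ P : Polynomial ℝ, P.natDegree ≤ k ∧ ∀ ν, P.eval ν = poch (ν + s) k := by
  refine ⟨(ascPochhammer ℝ k).comp (Polynomial.X + Polynomial.C s), ?_, fun ν => ?_⟩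
  · rw [Polynomial.natDegree_comp, ascPochhammer_natDegree, Polynomial.natDegree_X_add_C, mul_one]
  · rw [Polynomial.eval_comp, Polynomial.eval_add, Polynomial.eval_X, Polynomial.eval_C,
      poch_eq_eval_ascPochhammer]

lemma exists_natDegree_le_eval_eq_coeff_binomOneSub_mul_hypSeries (s b c : ℝ) (k : ℕ) :
    ∃ P : Polynomial ℝ, P.natDegree ≤ k ∧
      ∀ ν, P.eval ν = coeff k (binomOneSub ν * hypSeries (ν + s) b c) := by
  choose G hGdeg hG using exists_natDegree_le_eval_eq_gchoose 0
  choose Q hQdeg hQ using exists_natDegree_le_eval_eq_poch s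
  refine ⟨∑ x ∈ antidiagonal k,
    Polynomial.C ((-1) ^ x.1 * poch b x.2 / (poch c x.2 * x.2.factorial)) * (G x.1 * Q x.2),
    ?_, fun ν => ?_⟩
  · refine Polynomial.natDegree_sum_le_of_forall_le _ _ fun x hx => ?_
    refine (Polynomial.natDegree_C_mul_le _ _).trans (Polynomial.natDegree_mul_le.trans ?_)
    rw [← HasAntidiagonal.mem_antidiagonal.mp hx]
    exact add_le_add (hGdeg _) (hQdeg _)
  · rw [coeff_mul, Polynomial.eval_finsetSum]
    refine sum_congr rfl fun x _ => ?_
    rw [Polynomial.eval_mul, Polynomial.eval_mul, Polynomial.eval_C, hG, hQ, add_zero,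
      coeff_binomOneSub, coeff_hypSeries]
    ring

noncomputable def padeRemainder (m n : ℕ) (ν : ℝ) : ℝ⟦X⟧ :=
  hypSeries (-ν - n) (-(m : ℝ)) (-(m : ℝ) - n) -
    binomOneSub ν * hypSeries (ν - m) (-(n : ℝ)) (-(m : ℝ) - n)

lemma neg_natCast_sub_natCast (m n : ℕ) : -(m : ℝ) - n = -((m + n : ℕ) : ℝ) := by
  push_cast; ring

lemma hypOp_padeRemainder (m n : ℕ) (ν : ℝ) :
    hypOp (-ν - n) (-m) (-(m + n : ℕ)) (padeRemainder m n ν) = 0 := by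
  have hEuler := hypOp_binomOneSub_mul (-ν - n) (-m) (-(m + n : ℕ))
    (hypSeries (ν - m) (-n) (-(m + n : ℕ)))
  rw [show -((m + n : ℕ) : ℝ) - (-ν - n) - -m = ν by push_cast; ring,
    show -((m + n : ℕ) : ℝ) - (-ν - n) = ν - m by push_cast; ring,
    show -((m + n : ℕ) : ℝ) - -m = -n by push_cast; ring,
    hypOp_hypSeries_neg_natCast _ (by omega), mul_zero] at hEuler
  rw [padeRemainder, neg_natCast_sub_natCast, hypOp_sub, hEuler,
    hypOp_hypSeries_neg_natCast _ (by omega), sub_zero]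

lemma coeff_zero_padeRemainder (m n : ℕ) (ν : ℝ) : coeff 0 (padeRemainder m n ν) = 0 := by
  rw [padeRemainder, map_sub, coeff_mul, Nat.antidiagonal_zero, sum_singleton, coeff_hypSeries,
    coeff_hypSeries, coeff_binomOneSub]
  simp [poch, gchoose]

lemma coeff_padeRemainder_of_le (m n : ℕ) (ν : ℝ) {k : ℕ} (hk : k ≤ m + n) :
    coeff k (padeRemainder m n ν) = 0 :=
  coeff_eq_zero_of_hypOp_eq_zero_of_le (hypOp_padeRemainder m n ν)
    (coeff_zero_padeRemainder m n ν) hk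

lemma coeff_succ_add_padeRemainder_eq (m n : ℕ) (ν : ℝ) :
    coeff (m + n + 1) (padeRemainder m n ν) =
      -coeff (m + n + 1) (binomOneSub ν * hypSeries (ν - m) (-(n : ℝ)) (-(m : ℝ) - n)) := by
  rw [padeRemainder, map_sub, coeff_hypSeries_neg_natCast_of_lt _ _ (by omega), zero_sub]

lemma binomOneSub_mul_padeRemainder_swap (m n : ℕ) (ν : ℝ) :
    binomOneSub ν * padeRemainder n m (-ν) = -padeRemainder m n ν := by
  have hinv : binomOneSub ν * binomOneSub (-ν) = 1 := by
    rw [← binomOneSub_add, add_neg_cancel, binomOneSub_zero]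
  rw [padeRemainder, padeRemainder, neg_neg, show -(n : ℝ) - m = -(m : ℝ) - n by ring, mul_sub,
    ← mul_assoc, hinv, one_mul]
  ring

lemma X_pow_dvd_padeRemainder_natCast (m n : ℕ) {r : ℕ} (hr : r ≤ m) :
    X ^ (m + n + 2) ∣ padeRemainder m n r := by
  refine X_pow_dvd_iff.mpr fun k hk => ?_
  rcases Nat.lt_succ_iff.mp hk |>.lt_or_eq with hk | rfl
  · exact coeff_padeRemainder_of_le m n r (by omega)
  rw [coeff_succ_add_padeRemainder_eq, neg_eq_zero]
  refine coeff_mul_eq_zero_of_lt (p := r) (q := n) (fun i hi => coeff_binomOneSub_natCast_of_lt hi)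
    (fun j hj => coeff_hypSeries_neg_natCast_of_lt _ _ hj) (by omega)

lemma X_pow_dvd_padeRemainder_neg_natCast (m n : ℕ) {r : ℕ} (hr : r ≤ n) :
    X ^ (m + n + 2) ∣ padeRemainder m n (-r) := by
  rw [← neg_neg (padeRemainder m n _), ← binomOneSub_mul_padeRemainder_swap, neg_neg,
    add_comm m n]
  exact (dvd_mul_of_dvd_right (X_pow_dvd_padeRemainder_natCast n m hr) _).neg_right

lemma coeff_succ_add_padeRemainder_natCast_sub (m n : ℕ) {s : ℕ} (hs : s ≤ m + n) :
    coeff (m + n + 1) (padeRemainder m n (s - n)) = 0 := by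
  have hdvd : X ^ (m + n + 2) ∣ padeRemainder m n (s - n) := by
    rcases le_or_gt n s with h | h
    · rw [show (s : ℝ) - n = (s - n : ℕ) by push_cast [h]; ring]
      exact X_pow_dvd_padeRemainder_natCast m n (by omega)
    · rw [show (s : ℝ) - n = -(n - s : ℕ) by push_cast [h.le]; ring]
      exact X_pow_dvd_padeRemainder_neg_natCast m n (by omega)
  exact X_pow_dvd_iff.mp hdvd _ (by omega)

lemma coeff_hypSeries_one_neg_natCast (m n : ℕ) :
    coeff n (hypSeries 1 (-(n : ℝ)) (-(m : ℝ) - n)) = ((m + n).choose m : ℝ)⁻¹ := by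
  rw [coeff_hypSeries, poch_one, neg_natCast_sub_natCast, poch_neg_natCast, poch_neg_natCast,
    Nat.descFactorial_self, Nat.descFactorial_eq_factorial_mul_choose, ← Nat.choose_symm_add]
  have : ((m + n).choose m : ℝ) ≠ 0 := by exact_mod_cast (Nat.choose_pos (by omega)).ne'
  field_simp
  push_cast
  ring

lemma coeff_succ_add_padeRemainder_natCast_add_one (m n : ℕ) :
    coeff (m + n + 1) (padeRemainder m n (m + 1)) = (-1) ^ m / (m + n).choose m := by
  rw [coeff_succ_add_padeRemainder_eq, show m + n + 1 = (m + 1) + n by ring,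
    show ((m : ℝ) + 1) - m = 1 by ring, ← Nat.cast_add_one,
    coeff_add_mul_of_coeff_eq_zero (fun i hi => coeff_binomOneSub_natCast_of_lt hi)
      (fun j hj => coeff_hypSeries_neg_natCast_of_lt _ _ hj),
    coeff_binomOneSub, gchoose_natCast, Nat.choose_self, coeff_hypSeries_one_neg_natCast]
  push_cast
  ring

/-- Both sides are polynomials of degree `≤ m + n + 1` in `ν` which agree at the `m + n + 2`
points `ν = -n, …, m + 1`. -/
lemma coeff_succ_add_padeRemainder (m n : ℕ) (ν : ℝ) :
    coeff (m + n + 1) (padeRemainder m n ν) =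
      (-1) ^ m * gchoose (ν + n) (m + n + 1) / (m + n).choose m := by
  obtain ⟨P, hPdeg, hP⟩ :=
    exists_natDegree_le_eval_eq_coeff_binomOneSub_mul_hypSeries (-(m : ℝ)) (-(n : ℝ))
      (-(m : ℝ) - n) (m + n + 1)
  obtain ⟨Q, hQdeg, hQ⟩ := exists_natDegree_le_eval_eq_gchoose n (m + n + 1)
  have hR (ν : ℝ) : (-P).eval ν = coeff (m + n + 1) (padeRemainder m n ν) := by
    rw [Polynomial.eval_neg, hP, coeff_succ_add_padeRemainder_eq, ← sub_eq_add_neg]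
  have hPQ : -P = Polynomial.C ((-1 : ℝ) ^ m / (m + n).choose m) * Q := by
    refine Polynomial.eq_of_natDegree_lt_card_of_eval_eq _ _ (ι := Fin (m + n + 2))
      (f := fun i => (i : ℝ) - n) (fun i j hij => Fin.ext (by simpa using hij)) (fun i => ?_) ?_
    · rw [hR, Polynomial.eval_mul, Polynomial.eval_C, hQ, sub_add_cancel]
      rcases (Nat.lt_succ_iff.mp i.isLt).lt_or_eq with hi | hi
      · rw [coeff_succ_add_padeRemainder_natCast_sub m n (by omega), gchoose_natCast_of_lt hi,
          mul_zero]
      · rw [show (i : ℝ) - n = m + 1 by rw [hi]; push_cast; ring,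
          coeff_succ_add_padeRemainder_natCast_add_one, hi, gchoose_natCast, Nat.choose_self,
          Nat.cast_one, mul_one]
    · rw [Fintype.card_fin, Polynomial.natDegree_neg]
      exact max_lt (by omega) ((Polynomial.natDegree_C_mul_le _ _).trans_lt (by omega))
  rw [← hR, hPQ, Polynomial.eval_mul, Polynomial.eval_C, hQ]
  ring

theorem stmt_2_general (ν : ℝ) (m n : ℕ) :
    hypSeries (-ν - n) (-(m : ℝ)) (-(m : ℝ) - n) -
        binomOneSub ν * hypSeries (ν - m) (-(n : ℝ)) (-(m : ℝ) - n) =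
      (PowerSeries.C : ℝ →+* PowerSeries ℝ)
          ((-1) ^ m * gchoose ((n : ℝ) + ν) (m + n + 1) / ((m + n).choose m)) *
        (PowerSeries.X ^ (m + n + 1) *
          hypSeries (-ν + m + 1) ((n : ℝ) + 1) ((m : ℝ) + n + 2)) := by
  rw [← sub_eq_zero]
  change padeRemainder m n ν - _ = 0
  refine eq_zero_of_hypOp_eq_zero (a := -ν - n) (b := -m) (M := m + n) ?_ ?_ ?_
  · have hparams :
        hypOp (-ν - n + (m + n : ℕ) + 1) (-m + (m + n : ℕ) + 1) ((m + n : ℕ) + 2) =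
          hypOp (-ν + m + 1) (n + 1) (m + n + 2) := by
      congr 1 <;> push_cast <;> ring
    rw [hypOp_sub, hypOp_padeRemainder, hypOp_C_mul, hypOp_X_pow_mul, hparams,
      hypOp_hypSeries fun i => by positivity, mul_zero, mul_zero, sub_zero]
  · rw [map_sub, coeff_zero_padeRemainder, coeff_C_mul, coeff_X_pow_mul', if_neg (by omega)]
    ring
  · rw [map_sub, coeff_succ_add_padeRemainder, coeff_C_mul, coeff_X_pow_mul', if_pos le_rfl,
      Nat.sub_self, coeff_hypSeries, add_comm ν]
    simp [poch]

/-- **The Hermite–Padé identity for binomial functions:**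
`₂F₁(−ν−n, −m; −m−n; x) − (1−x)^ν · ₂F₁(ν−m, −n; −m−n; x)
  = (−1)^m · [C(n+ν, m+n+1)/C(m+n, m)] · x^{m+n+1} · ₂F₁(−ν+m+1, n+1; m+n+2; x)`
as formal power series in `x` over `ℝ`. -/
theorem stmt_2 (ν : ℝ) (m n : ℕ) (hν : ∀ j : ℕ, ν ≠ -((j : ℝ) + 1)) :
    hypSeries (-ν - n) (-(m : ℝ)) (-(m : ℝ) - n) -
        binomOneSub ν * hypSeries (ν - m) (-(n : ℝ)) (-(m : ℝ) - n) =
      (PowerSeries.C : ℝ →+* PowerSeries ℝ)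
          ((-1) ^ m * gchoose ((n : ℝ) + ν) (m + n + 1) / ((m + n).choose m)) *
        (PowerSeries.X ^ (m + n + 1) *
          hypSeries (-ν + m + 1) ((n : ℝ) + 1) ((m : ℝ) + n + 2)) :=
  stmt_2_general ν m n
end

section
/- Let ν ∈ ℝ and define A_ν(x,y) := ∑_{n≥0} ₂F₁(−ν−n, −n; −2n; x) · C(2n,n) · y^n as a formal power series in y over ℝ[x]. Then for both choices of sign ε ∈ {+1, −1}, the function f = A_{εν} satisfies the second-order linear ODE (1 − 4y + 2xy + x²y²) f'' + 3(x²y + x − 2) f' + x²(1 − ν²) f = 0, where derivatives are with respect to y. -/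
open Finset PowerSeries

/-- The hypergeometric polynomial `₂F₁(−ν−n, −n; −2n; x) ∈ ℝ[x]`. -/
noncomputable def dihedralCoeff (ν : ℝ) (n : ℕ) : Polynomial ℝ :=
  ∑ k ∈ Finset.range (n + 1),
    Polynomial.C (poch (-ν - n) k * poch (-(n : ℝ)) k /
      (poch (-2 * (n : ℝ)) k * k.factorial)) * Polynomial.X ^ k

/-- `A_ν(x,y) = ∑_{n≥0} ₂F₁(−ν−n, −n; −2n; x) C(2n,n) y^n ∈ ℝ[x]⟦y⟧`. -/
noncomputable def Aseries (ν : ℝ) : PowerSeries (Polynomial ℝ) :=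
  PowerSeries.mk fun n => (((2 * n).choose n : ℝ)) • dihedralCoeff ν n

/-!
Comparing coefficients of `y ^ n`, the equation says that `a n := coeff n A_μ ∈ ℝ[x]` satisfies
`(n+1)(n+2) a (n+2) + (n+1)(2n+3)(x-2) a (n+1) + x² ((n+1)² - μ²) a n = 0`,
which only involves `μ²`, so both signs `±ν` work.
Evaluating the Pochhammer symbols at negative integers, the coefficient of `x ^ k` in `a n` is
`(-1)^k (μ+n)(μ+n-1)⋯(μ+n-k+1) / k! * C(2n-k, n)`, a term that is hypergeometric in both
`n` and `k`. Its contiguity relations under `(n, k) ↦ (n+1, k+1)` and `k ↦ k+1` turn the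
coefficient of `x ^ (k+2)` in the recurrence into a multiple of the coefficient of `x ^ k`
in `a n`, by a rational function of `n`, `k`, `μ` that vanishes identically.
-/

section Operator

variable {R : Type*} [CommRing R]

noncomputable def dihedralOperator (x c : R) (f : R⟦X⟧) : R⟦X⟧ :=
  (1 - 4 * X + 2 * C x * X + C (x ^ 2) * X ^ 2) * d⁄dX R (d⁄dX R f) +
    3 * (C (x ^ 2) * X + C x - 2) * d⁄dX R f + C (x ^ 2 * c) * f

theorem coeff_dihedralOperator (x c : R) (f : R⟦X⟧) (n : ℕ) :
    coeff n (dihedralOperator x c f) =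
      ((n + 1) * (n + 2)) • coeff (n + 2) f
        + ((n + 1) * (2 * n + 3)) • (x * coeff (n + 1) f)
        - ((n + 1) * (4 * n + 6)) • coeff (n + 1) f
        + (n * (n + 2)) • (x ^ 2 * coeff n f) + x ^ 2 * c * coeff n f := by
  have h : dihedralOperator x c f = d⁄dX R (d⁄dX R f) - C 4 * (X * d⁄dX R (d⁄dX R f))
      + C (2 * x) * (X * d⁄dX R (d⁄dX R f)) + C (x ^ 2) * (X ^ 2 * d⁄dX R (d⁄dX R f))
      + C (3 * x ^ 2) * (X * d⁄dX R f) + C (3 * x) * d⁄dX R f - C 6 * d⁄dX R f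
      + C (x ^ 2 * c) * f := by
    simp only [dihedralOperator, map_mul, map_ofNat]; ring
  rcases n with _ | _ | n
  all_goals
    simp only [h, map_add, map_sub, coeff_C_mul, coeff_X_pow_mul', coeff_succ_X_mul,
      coeff_zero_X_mul, coeff_derivative, nsmul_eq_mul]
    push_cast
    ring

end Operator

open scoped Nat

theorem Nat.choose_mul_choose_sub_comm (m a b : ℕ) :
    m.choose a * (m - a).choose b = m.choose b * (m - b).choose a := by
  have ha := Nat.choose_mul (n := m) (Nat.le_add_right a b)
  have hb := Nat.choose_mul (n := m) (Nat.le_add_left b a)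
  rw [Nat.add_sub_cancel_left] at ha
  rw [Nat.add_sub_cancel] at hb
  rw [← ha, ← hb, Nat.choose_symm_add]

theorem poch_neg (a : ℝ) (k : ℕ) : poch (-a) k = (-1) ^ k * (descPochhammer ℝ k).eval a := by
  rw [poch, descPochhammer_eval_eq_prod_range, ← Finset.card_range k, ← Finset.prod_const,
    Finset.card_range, ← Finset.prod_mul_distrib]
  exact Finset.prod_congr rfl fun i _ => by ring

theorem poch_neg_natCast_s4 (n k : ℕ) : poch (-n) k = (-1) ^ k * k ! * n.choose k := by
  rw [poch_neg, descPochhammer_eval_eq_descFactorial, Nat.descFactorial_eq_factorial_mul_choose]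
  push_cast; ring

theorem coeff_dihedralCoeff_of_le {μ : ℝ} {n k : ℕ} (hk : k ≤ n) :
    (dihedralCoeff μ n).coeff k =
      poch (-μ - n) k * poch (-n) k / (poch (-2 * n) k * k !) := by
  simp only [dihedralCoeff, Polynomial.finsetSum_coeff, Polynomial.coeff_C_mul_X_pow]
  rw [Finset.sum_ite_eq_of_mem _ _ _ (Finset.mem_range.2 (Nat.lt_succ_of_le hk))]

theorem coeff_dihedralCoeff_of_lt {μ : ℝ} {n k : ℕ} (hk : n < k) :
    (dihedralCoeff μ n).coeff k = 0 := by
  simp only [dihedralCoeff, Polynomial.finsetSum_coeff, Polynomial.coeff_C_mul_X_pow]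
  exact Finset.sum_eq_zero fun i hi => if_neg (by grind)

noncomputable def aseriesCoeff (μ : ℝ) (n k : ℕ) : ℝ := (coeff n (Aseries μ)).coeff k

theorem coeff_coeff_Aseries (μ : ℝ) (n k : ℕ) :
    (coeff n (Aseries μ)).coeff k = aseriesCoeff μ n k := rfl

theorem aseriesCoeff_eq_choose_mul_coeff (μ : ℝ) (n k : ℕ) :
    aseriesCoeff μ n k = (2 * n).choose n * (dihedralCoeff μ n).coeff k := by
  simp [aseriesCoeff, Aseries, Polynomial.coeff_smul]

theorem aseriesCoeff_of_lt {μ : ℝ} {n k : ℕ} (hk : n < k) : aseriesCoeff μ n k = 0 := by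
  rw [aseriesCoeff_eq_choose_mul_coeff, coeff_dihedralCoeff_of_lt hk, mul_zero]

theorem factorial_mul_aseriesCoeff (μ : ℝ) {n k : ℕ} (hk : k ≤ n) :
    k ! * aseriesCoeff μ n k =
      (-1) ^ k * (descPochhammer ℝ k).eval (μ + n) * (2 * n - k).choose n := by
  have hchoose := Nat.choose_mul_choose_sub_comm (2 * n) k n
  rw [show 2 * n - n = n by omega] at hchoose
  have hchoose' :
      ((2 * n).choose k * (2 * n - k).choose n : ℝ) = (2 * n).choose n * n.choose k := by
    exact_mod_cast hchoose
  have hpos : ((2 * n).choose k : ℝ) ≠ 0 := by exact_mod_cast (Nat.choose_pos (by omega)).ne'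
  rw [aseriesCoeff_eq_choose_mul_coeff, coeff_dihedralCoeff_of_le hk,
    show -2 * (n : ℝ) = -((2 * n : ℕ) : ℝ) by push_cast; ring,
    show -μ - n = -(μ + n) by ring, poch_neg_natCast_s4, poch_neg_natCast_s4, poch_neg]
  field_simp
  linear_combination -(descPochhammer ℝ k).eval (μ + n) * hchoose'

theorem aseriesCoeff_zero_right (μ : ℝ) (n : ℕ) : aseriesCoeff μ n 0 = (2 * n).choose n := by
  simpa using factorial_mul_aseriesCoeff μ (Nat.zero_le n)

theorem succ_mul_aseriesCoeff_succ_zero (μ : ℝ) (n : ℕ) :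
    ((n : ℝ) + 1) * aseriesCoeff μ (n + 1) 0 = 2 * (2 * n + 1) * aseriesCoeff μ n 0 := by
  simp only [aseriesCoeff_zero_right, ← Nat.centralBinom_eq_two_mul_choose]
  exact_mod_cast Nat.succ_mul_centralBinom_succ n

theorem aseriesCoeff_succ_succ (μ : ℝ) {n k : ℕ} (hk : k ≤ n) :
    ((k : ℝ) + 1) * (n + 1) * aseriesCoeff μ (n + 1) (k + 1) =
      -(μ + n + 1) * (2 * n - k + 1) * aseriesCoeff μ n k := by
  obtain ⟨m, hm⟩ : ∃ m, 2 * n - k = m := ⟨_, rfl⟩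
  have hmR : (2 * n - k : ℝ) = m := by rw [← hm, Nat.cast_sub (by omega)]; push_cast; ring
  have hchoose : ((m : ℝ) + 1) * m.choose n = (m + 1).choose (n + 1) * (n + 1) := by
    exact_mod_cast Nat.add_one_mul_choose_eq m n
  have ht := factorial_mul_aseriesCoeff μ hk
  have hu := factorial_mul_aseriesCoeff μ (by omega : k + 1 ≤ n + 1)
  rw [hm] at ht
  rw [show 2 * (n + 1) - (k + 1) = m + 1 by omega, descPochhammer_succ_left, Polynomial.eval_mul,
    Polynomial.eval_comp, Nat.factorial_succ, pow_succ] at hu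
  push_cast at hu
  rw [Polynomial.eval_sub, Polynomial.eval_X, Polynomial.eval_one,
    show μ + (n + 1) - 1 = μ + n by ring] at hu
  rw [hmR]
  refine mul_left_cancel₀ (Nat.cast_ne_zero.2 k.factorial_ne_zero : (k ! : ℝ) ≠ 0) ?_
  linear_combination (n + 1 : ℝ) * hu + (μ + n + 1) * (m + 1) * ht
    + (μ + n + 1) * (-1) ^ k * (descPochhammer ℝ k).eval (μ + n) * hchoose

theorem aseriesCoeff_succ_right (μ : ℝ) {n k : ℕ} (hk : k ≤ n) :
    ((k : ℝ) + 1) * (2 * n - k) * aseriesCoeff μ n (k + 1) =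
      -(μ + n - k) * (n - k) * aseriesCoeff μ n k := by
  rcases hk.eq_or_lt with rfl | hk
  · simp [aseriesCoeff_of_lt (Nat.lt_succ_self k)]
  obtain ⟨m, hm⟩ : ∃ m, 2 * n - (k + 1) = m := ⟨_, rfl⟩
  have hmR : (2 * n - k : ℝ) = m + 1 := by rw [← hm, Nat.cast_sub (by omega)]; push_cast; ring
  have hnk : (n - k : ℝ) = (m + 1 - n : ℕ) := by
    rw [Nat.cast_sub (by omega)]; push_cast; linarith
  have hchoose : (m.choose n : ℝ) * (m + 1) = (m + 1).choose n * (m + 1 - n : ℕ) := by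
    exact_mod_cast Nat.choose_mul_succ_eq m n
  have ht := factorial_mul_aseriesCoeff μ hk.le
  have hu := factorial_mul_aseriesCoeff μ hk
  rw [show 2 * n - k = m + 1 by omega] at ht
  rw [hm, descPochhammer_succ_eval, Nat.factorial_succ, pow_succ] at hu
  push_cast at hu
  rw [hmR, hnk]
  refine mul_left_cancel₀ (Nat.cast_ne_zero.2 k.factorial_ne_zero : (k ! : ℝ) ≠ 0) ?_
  linear_combination (m + 1 : ℝ) * hu + (μ + n - k) * (m + 1 - n : ℕ) * ht
    - (μ + n - k) * (-1) ^ k * (descPochhammer ℝ k).eval (μ + n) * hchoose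

theorem aseriesCoeff_recurrence (μ : ℝ) (n k : ℕ) :
    ((n : ℝ) + 1) * (n + 2) * aseriesCoeff μ (n + 2) (k + 2)
      + (n + 1) * (2 * n + 3) * aseriesCoeff μ (n + 1) (k + 1)
      - 2 * (n + 1) * (2 * n + 3) * aseriesCoeff μ (n + 1) (k + 2)
      + ((n + 1) ^ 2 - μ ^ 2) * aseriesCoeff μ n k = 0 := by
  rcases le_or_gt k n with hk | hk
  · have hu := aseriesCoeff_succ_succ μ hk
    have hv := aseriesCoeff_succ_succ μ (by omega : k + 1 ≤ n + 1)
    have hw := aseriesCoeff_succ_right μ (by omega : k + 1 ≤ n + 1)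
    push_cast at hv hw
    have hpos : (0 : ℝ) < 2 * n - k + 1 := by
      have : (k : ℝ) ≤ n := by exact_mod_cast hk
      linarith
    refine mul_left_cancel₀ (mul_pos (by positivity : (0 : ℝ) < (k + 1) * (k + 2)) hpos).ne' ?_
    linear_combination (n + 1) * (k + 1) * (2 * n - k + 1) * hv
      - 2 * (n + 1) * (2 * n + 3) * (k + 1) * hw + (k + 1) * (k + 2) * (n + 1 - μ) * hu
  · rw [aseriesCoeff_of_lt (by omega : n + 2 < k + 2),
      aseriesCoeff_of_lt (by omega : n + 1 < k + 1),
      aseriesCoeff_of_lt (by omega : n + 1 < k + 2), aseriesCoeff_of_lt hk]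
    ring

theorem coeff_Aseries_recurrence (μ : ℝ) (n : ℕ) :
    ((n + 1) * (n + 2)) • coeff (n + 2) (Aseries μ)
      + ((n + 1) * (2 * n + 3)) • (Polynomial.X * coeff (n + 1) (Aseries μ))
      - ((n + 1) * (4 * n + 6)) • coeff (n + 1) (Aseries μ)
      + (n * (n + 2)) • (Polynomial.X ^ 2 * coeff n (Aseries μ))
      + Polynomial.X ^ 2 * Polynomial.C (1 - μ ^ 2) * coeff n (Aseries μ) = 0 := by
  ext m
  rcases m with _ | _ | k
  all_goals
    simp only [mul_assoc (Polynomial.X ^ 2), Polynomial.coeff_add, Polynomial.coeff_sub,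
      Polynomial.coeff_smul, Polynomial.coeff_X_pow_mul', Polynomial.coeff_X_mul,
      Polynomial.coeff_X_mul_zero, Polynomial.coeff_C_mul, coeff_coeff_Aseries,
      Polynomial.coeff_zero]
    simp only [nsmul_eq_mul]
    push_cast
  · have h := succ_mul_aseriesCoeff_succ_zero μ (n + 1)
    push_cast at h
    linear_combination (n + 1 : ℝ) * h
  · have h₁ := aseriesCoeff_succ_succ μ (Nat.zero_le (n + 1))
    have h₂ := aseriesCoeff_succ_right μ (Nat.zero_le (n + 1))
    push_cast at h₁ h₂
    linear_combination (n + 1 : ℝ) * h₁ - (2 * n + 3 : ℝ) * h₂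
  · linear_combination aseriesCoeff_recurrence μ n k

theorem dihedralOperator_Aseries (μ : ℝ) :
    dihedralOperator Polynomial.X (Polynomial.C (1 - μ ^ 2)) (Aseries μ) = 0 := by
  ext n
  rw [coeff_dihedralOperator, coeff_Aseries_recurrence, map_zero]

/-- **The dihedral ODE:** for both `f = A_ν` and `f = A_{−ν}`, one has
`(1 − 4y + 2xy + x²y²) f'' + 3(x²y + x − 2) f' + x²(1 − ν²) f = 0`
as formal power series in `y` over `ℝ[x]`. -/
theorem stmt_4 (ν : ℝ) (ε : ℝ) (hε : ε = 1 ∨ ε = -1) :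
    (1 - 4 * PowerSeries.X + 2 * PowerSeries.C (R := Polynomial ℝ) Polynomial.X * PowerSeries.X
          + PowerSeries.C (R := Polynomial ℝ) (Polynomial.X ^ 2) * PowerSeries.X ^ 2) *
        PowerSeries.derivativeFun (PowerSeries.derivativeFun (Aseries (ε * ν))) +
      3 * (PowerSeries.C (R := Polynomial ℝ) (Polynomial.X ^ 2) * PowerSeries.X
          + PowerSeries.C (R := Polynomial ℝ) Polynomial.X - 2) *
        PowerSeries.derivativeFun (Aseries (ε * ν)) +
      PowerSeries.C (R := Polynomial ℝ)
          (Polynomial.X ^ 2 * Polynomial.C (1 - ν ^ 2)) * Aseries (ε * ν) = 0 := by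
  have hsq : ν ^ 2 = (ε * ν) ^ 2 := by rcases hε with rfl | rfl <;> ring
  rw [hsq]
  exact dihedralOperator_Aseries (ε * ν)
end

section
/- For a rational number ν with denominator r (i.e., ν = p/r in lowest terms), the power series A_ν(x,y) := ∑_{n≥0} ₂F₁(−ν−n, −n; −2n; x) C(2n,n) y^n lies in ℤ⟦y, xy/r²⟧; that is, writing A_ν(x,y) = ∑_{n≥0} ∑_{k=0}^n c_{n,k} x^{n−k} y^n, each coefficient c_{n,k} · r^{2(n−k)} is an integer. -/
/-!
With `m = n - k` and `ν = p / r`, `r ^ (2m) c_{n,k} = ± C(n+k,k) r^m ∏_{j<m} (r(k+1+j) - p) / m!`,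
so it suffices that `m!` divides `r^m ∏_{j<m} (r(s+j) - c)` for all integers `r, s, c`.
This is checked prime by prime: a prime power `q^e ∣ m!` has `e ≤ m`, so it divides `r^m` when
`q ∣ r`; when `q ∤ r`, `r` is invertible modulo `q^e`, and modulo `q^e` the product is `r^m` times
a product of `m` consecutive integers, which `m!` divides.
-/

open Finset

/-- The coefficient `c_{n,k} = (−1)^{n−k} (n−ν)(n−1−ν)⋯(k+1−ν)/(n−k)! · C(n+k,k)`
of `x^{n−k} y^n` in `A_ν(x,y) = ∑_{n≥0} ₂F₁(−ν−n, −n; −2n; x) C(2n,n) y^n`. -/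
noncomputable def cCoeff (ν : ℝ) (n k : ℕ) : ℝ :=
  (-1) ^ (n - k) * (∏ i ∈ Finset.Icc (k + 1) n, ((i : ℝ) - ν)) / (n - k).factorial *
    ((n + k).choose k)

open scoped Nat

theorem Int.factorial_dvd_prod_range_add (m : ℕ) (a : ℤ) :
    (m ! : ℤ) ∣ ∏ j ∈ Finset.range m, (a + j) := by
  have hprod : (ascPochhammer ℤ m).eval a = ∏ j ∈ Finset.range m, (a + j) := by
    induction m with
    | zero => simp
    | succ m ih => rw [ascPochhammer_succ_eval, prod_range_succ, ih]
  refine ⟨Ring.multichoose a m, ?_⟩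
  rw [← hprod, ← Polynomial.ascPochhammer_smeval_eq_eval,
    ← Ring.factorial_nsmul_multichoose_eq_ascPochhammer, nsmul_eq_mul]

theorem Int.dvd_prod_mul_add_sub_of_isCoprime {r d : ℤ} (hrd : IsCoprime r d) {m : ℕ}
    (hd : d ∣ (m ! : ℤ)) (s c : ℤ) : d ∣ ∏ j ∈ Finset.range m, (r * (s + j) - c) := by
  obtain ⟨a, b, hab⟩ := hrd
  have hmod : ∀ j ∈ Finset.range m, r * (s + j) - c ≡ r * (s - a * c + j) [ZMOD d] := fun j _ =>
    Int.modEq_iff_dvd.2 ⟨b * c, by linear_combination (-c) * hab⟩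
  have hrun : d ∣ ∏ j ∈ Finset.range m, r * (s - a * c + j) := by
    rw [prod_mul_distrib, prod_const, card_range]
    exact dvd_mul_of_dvd_right (hd.trans (factorial_dvd_prod_range_add m _))
  exact Int.modEq_zero_iff_dvd.1 ((Int.ModEq.prod hmod).trans (Int.modEq_zero_iff_dvd.2 hrun))

theorem Int.factorial_dvd_pow_mul_prod_mul_add_sub (r s c : ℤ) (m : ℕ) :
    (m ! : ℤ) ∣ r ^ m * ∏ j ∈ Finset.range m, (r * (s + j) - c) := by
  rw [← Int.natAbs_dvd_natAbs, Int.natAbs_natCast, Nat.dvd_iff_prime_pow_dvd_dvd]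
  intro q e hq hqe
  rw [← Int.natCast_dvd, Nat.cast_pow]
  by_cases hqr : (q : ℤ) ∣ r
  · have he : e ≤ m :=
      ((hq.pow_dvd_iff_le_factorization (Nat.factorial_ne_zero m)).1 hqe).trans
        ((Nat.factorization_factorial_le_div_pred hq m).trans (Nat.div_le_self _ _))
    exact dvd_mul_of_dvd_left ((pow_dvd_pow _ he).trans (pow_dvd_pow_of_dvd hqr m))
  · have hcop : IsCoprime r ((q : ℤ) ^ e) :=
      ((Irreducible.coprime_iff_not_dvd (Nat.prime_iff_prime_int.1 hq).irreducible).2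
        hqr).symm.pow_right
    exact dvd_mul_of_dvd_right
      (dvd_prod_mul_add_sub_of_isCoprime hcop (by exact_mod_cast hqe) s c)

theorem prod_Icc_sub_div_mul_pow {K : Type*} [Field K] {r : K} (hr : r ≠ 0) (p : K)
    (k n : ℕ) :
    (∏ i ∈ Icc (k + 1) n, ((i : K) - p / r)) * r ^ (n - k) =
      ∏ j ∈ range (n - k), (r * (k + 1 + j) - p) := by
  rw [← Ico_add_one_right_eq_Icc, prod_Ico_eq_prod_range, Nat.add_sub_add_right]
  nth_rw 2 [← card_range (n - k)]
  rw [prod_mul_pow_card]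
  refine prod_congr rfl fun j _ => ?_
  push_cast
  field_simp

theorem stmt_5_general (p : ℤ) (r : ℕ) (hr : 0 < r) (ν : ℝ)
    (hν : ν = (p : ℝ) / r) :
    ∀ n k : ℕ, k ≤ n → ∃ z : ℤ, cCoeff ν n k * (r : ℝ) ^ (2 * (n - k)) = z := by
  intro n k _
  obtain ⟨z, hz⟩ := Int.factorial_dvd_pow_mul_prod_mul_add_sub r (k + 1) p (n - k)
  refine ⟨(-1) ^ (n - k) * (n + k).choose k * z, ?_⟩
  have hr0 : (r : ℝ) ≠ 0 := by positivity
  have hprod := prod_Icc_sub_div_mul_pow hr0 p k n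
  have hz' : (r : ℝ) ^ (n - k) * ∏ j ∈ range (n - k), ((r : ℝ) * (k + 1 + j) - p) =
      (n - k)! * z := by exact_mod_cast hz
  rw [← hν] at hprod
  calc cCoeff ν n k * (r : ℝ) ^ (2 * (n - k))
      = (-1) ^ (n - k) * (n + k).choose k *
          ((r : ℝ) ^ (n - k) * ((∏ i ∈ Icc (k + 1) n, ((i : ℝ) - ν)) * (r : ℝ) ^ (n - k)) /
            (n - k)!) := by
        rw [cCoeff, two_mul, pow_add]; ring
    _ = _ := by
        rw [hprod, hz', mul_div_cancel_left₀ _ (by positivity)]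
        push_cast
        ring

/-- **Integrality of the dihedral series:** if `ν = p/r` in lowest terms then
`A_ν(x,y) ∈ ℤ⟦y, xy/r²⟧`, i.e. `r^{2(n−k)} · c_{n,k} ∈ ℤ` for all `0 ≤ k ≤ n`. -/
theorem stmt_5 (p : ℤ) (r : ℕ) (hr : 0 < r) (hpr : p.gcd r = 1) (ν : ℝ)
    (hν : ν = (p : ℝ) / r) :
    ∀ n k : ℕ, k ≤ n → ∃ z : ℤ, cCoeff ν n k * (r : ℝ) ^ (2 * (n - k)) = z :=
  stmt_5_general p r hr ν hν
end
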